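/- Under the stated hypotheses, for all semibasic vector fields U = (U^i), V = (V^i) with smooth components on W, at every point of W where F = 1 (summing over repeated indices): y^k φ_{:k} = ⟨XU, V⟩ + ⟨U, XV⟩ − ⟨(∇_{·U}Y)(y), V⟩, where φ := g_{ij}U^iV^j (so φ_{:k} := φ_{|k} + F Y^j_k φ_{·j} with φ_{|k} := ∂φ/∂x^k − N^p_k ∂φ/∂y^p and φ_{·j} := ∂φ/∂y^j), (XU)^i := y^k U^i_{:k}, ⟨U,V⟩ := g_{ij}U^iV^j, and (∇_{·U}Y)(y)^i := (∂Y^i_k/∂y^j) U^j y^k. -/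

import Mathlib

noncomputable section

/-- A point of the local chart `W ⊆ ℝⁿ × (ℝⁿ ∖ {0})` of `TM ∖ {0}`. -/
abbrev Pt (n : ℕ) := (Fin n → ℝ) × (Fin n → ℝ)

/-- Partial derivative in the `k`-th base (`x`) direction. -/
def pdx {n : ℕ} (k : Fin n) (f : Pt n → ℝ) (z : Pt n) : ℝ :=
  fderiv ℝ f z (Pi.single k 1, 0)

/-- Partial derivative in the `k`-th fibre (`y`) direction. -/
def pdy {n : ℕ} (k : Fin n) (f : Pt n → ℝ) (z : Pt n) : ℝ :=
  fderiv ℝ f z (0, Pi.single k 1)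

/-- The fundamental tensor `g_{ij} = ½ ∂²(F²)/∂y^i∂y^j`. -/
def gF {n : ℕ} (F : Pt n → ℝ) (i j : Fin n) : Pt n → ℝ :=
  fun z => (1 / 2 : ℝ) * pdy i (pdy j (fun w => F w ^ 2)) z

/-- The Cartan tensor `C_{ijk} = ¼ ∂³(F²)/∂y^i∂y^j∂y^k`. -/
def CF {n : ℕ} (F : Pt n → ℝ) (i j k : Fin n) : Pt n → ℝ :=
  fun z => (1 / 4 : ℝ) * pdy i (pdy j (pdy k (fun w => F w ^ 2))) z

/-- `y_k := g_{kj} y^j`. -/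
def ylow {n : ℕ} (F : Pt n → ℝ) (k : Fin n) : Pt n → ℝ :=
  fun z => ∑ j, gF F k j z * z.2 j

/-- `N^i_j := Γ^i_{jk} y^k`. -/
def Nc {n : ℕ} (Γ : Fin n → Fin n → Fin n → Pt n → ℝ) (i j : Fin n) : Pt n → ℝ :=
  fun z => ∑ k, Γ i j k z * z.2 k

/-- Horizontal derivative of a scalar: `u_{|k} := ∂u/∂x^k − N^p_k ∂u/∂y^p`. -/
def dhS {n : ℕ} (Γ : Fin n → Fin n → Fin n → Pt n → ℝ) (k : Fin n) (u : Pt n → ℝ) :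
    Pt n → ℝ :=
  fun z => pdx k u z - ∑ p, Nc Γ p k z * pdy p u z

/-- The Chern curvature contraction `P^i_{lk} := −y^j ∂Γ^i_{jl}/∂y^k`. -/
def Pc {n : ℕ} (Γ : Fin n → Fin n → Fin n → Pt n → ℝ) (i l k : Fin n) : Pt n → ℝ :=
  fun z => -∑ j, z.2 j * pdy k (Γ i j l) z

/-- The Riemann curvature tensor `R^i_{jkl}` of the connection. -/
def Rfull {n : ℕ} (Γ : Fin n → Fin n → Fin n → Pt n → ℝ) (i j k l : Fin n) :
    Pt n → ℝ :=
  fun z => pdx k (Γ i j l) z - pdx l (Γ i j k) z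
    + (∑ m, pdy m (Γ i j k) z * Nc Γ m l z)
    - (∑ m, pdy m (Γ i j l) z * Nc Γ m k z)
    + (∑ m, Γ m j l z * Γ i m k z) - ∑ m, Γ m j k z * Γ i m l z

/-- `R^i_{kl} := y^j R^i_{jkl}`. -/
def Rc {n : ℕ} (Γ : Fin n → Fin n → Fin n → Pt n → ℝ) (i k l : Fin n) : Pt n → ℝ :=
  fun z => ∑ j, z.2 j * Rfull Γ i j k l z

/-- The Lorentz force `Y^i_j := Ω_{jk} g^{ik}` (with `Ω` a function of `x` only). -/
def Yl {n : ℕ} (Ω : Fin n → Fin n → (Fin n → ℝ) → ℝ)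
    (ginv : Fin n → Fin n → Pt n → ℝ) (i j : Fin n) : Pt n → ℝ :=
  fun z => ∑ k, Ω j k z.1 * ginv i k z

/-- Magnetic derivative of a scalar: `u_{:k} := u_{|k} + F Y^j_k u_{·j}`. -/
def dmS {n : ℕ} (F : Pt n → ℝ) (Γ : Fin n → Fin n → Fin n → Pt n → ℝ)
    (Ω : Fin n → Fin n → (Fin n → ℝ) → ℝ) (ginv : Fin n → Fin n → Pt n → ℝ)
    (k : Fin n) (u : Pt n → ℝ) : Pt n → ℝ :=
  fun z => dhS Γ k u z + F z * ∑ j, Yl Ω ginv j k z * pdy j u z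

/-- Horizontal covariant derivative of the Lorentz force:
`Y^i_{j|k} := ∂Y^i_j/∂x^k − N^p_k ∂Y^i_j/∂y^p + Γ^i_{kp} Y^p_j − Γ^p_{kj} Y^i_p`. -/
def Ydh {n : ℕ} (Γ : Fin n → Fin n → Fin n → Pt n → ℝ)
    (Ω : Fin n → Fin n → (Fin n → ℝ) → ℝ) (ginv : Fin n → Fin n → Pt n → ℝ)
    (i j k : Fin n) : Pt n → ℝ :=
  fun z => pdx k (Yl Ω ginv i j) z - (∑ p, Nc Γ p k z * pdy p (Yl Ω ginv i j) z)
    + (∑ p, Γ i k p z * Yl Ω ginv p j z) - ∑ p, Γ p k j z * Yl Ω ginv i p z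

/-- The twisted curvature `R̃^i_{lk}` of the magnetic flow. -/
def Rt {n : ℕ} (F : Pt n → ℝ) (Γ : Fin n → Fin n → Fin n → Pt n → ℝ)
    (Ω : Fin n → Fin n → (Fin n → ℝ) → ℝ) (ginv : Fin n → Fin n → Pt n → ℝ)
    (i l k : Fin n) : Pt n → ℝ :=
  fun z => Rc Γ i l k z
    + (Ydh Γ Ω ginv i l k z - Ydh Γ Ω ginv i k l z)
    - ((∑ m, Pc Γ i l m z * Yl Ω ginv m k z) - ∑ m, Pc Γ i k m z * Yl Ω ginv m l z)
    + ((∑ j, Yl Ω ginv j l z * pdy j (Yl Ω ginv i k) z)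
        - ∑ j, Yl Ω ginv j k z * pdy j (Yl Ω ginv i l) z)
    + ∑ s, ylow F s z * (Yl Ω ginv s k z * Yl Ω ginv i l z
        - Yl Ω ginv s l z * Yl Ω ginv i k z)

/-- `∇^·u := (g^{ij} u_{·j})`. -/
def nablaV {n : ℕ} (ginv : Fin n → Fin n → Pt n → ℝ) (u : Pt n → ℝ) (i : Fin n) :
    Pt n → ℝ :=
  fun z => ∑ j, ginv i j z * pdy j u z

/-- `∇^:u := (g^{ij} u_{:j})`. -/
def nablaM {n : ℕ} (F : Pt n → ℝ) (Γ : Fin n → Fin n → Fin n → Pt n → ℝ)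
    (Ω : Fin n → Fin n → (Fin n → ℝ) → ℝ) (ginv : Fin n → Fin n → Pt n → ℝ)
    (u : Pt n → ℝ) (i : Fin n) : Pt n → ℝ :=
  fun z => ∑ j, ginv i j z * dmS F Γ Ω ginv j u z

/-- The generator applied to a scalar: `Xu := y^k u_{:k}`. -/
def Xs {n : ℕ} (F : Pt n → ℝ) (Γ : Fin n → Fin n → Fin n → Pt n → ℝ)
    (Ω : Fin n → Fin n → (Fin n → ℝ) → ℝ) (ginv : Fin n → Fin n → Pt n → ℝ)
    (u : Pt n → ℝ) : Pt n → ℝ :=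
  fun z => ∑ k, z.2 k * dmS F Γ Ω ginv k u z

/-- `⟨U,V⟩ := g_{ij} U^i V^j`. -/
def iprod {n : ℕ} (F : Pt n → ℝ) (U V : Fin n → Pt n → ℝ) : Pt n → ℝ :=
  fun z => ∑ i, ∑ j, gF F i j z * U i z * V j z

/-- Magnetic derivative of a semibasic vector field:
`U^i_{:k} := U^i_{|k} + F Y^j_k U^i_{·j}`. -/
def dmVec {n : ℕ} (F : Pt n → ℝ) (Γ : Fin n → Fin n → Fin n → Pt n → ℝ)
    (Ω : Fin n → Fin n → (Fin n → ℝ) → ℝ) (ginv : Fin n → Fin n → Pt n → ℝ)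
    (k : Fin n) (U : Fin n → Pt n → ℝ) (i : Fin n) : Pt n → ℝ :=
  fun z => pdx k (U i) z - (∑ p, Nc Γ p k z * pdy p (U i) z)
    + (∑ p, Γ i k p z * U p z)
    + F z * ∑ j, Yl Ω ginv j k z * pdy j (U i) z

/-- The generator applied to a semibasic vector field: `(XV)^i := y^k V^i_{:k}`. -/
def XVec {n : ℕ} (F : Pt n → ℝ) (Γ : Fin n → Fin n → Fin n → Pt n → ℝ)
    (Ω : Fin n → Fin n → (Fin n → ℝ) → ℝ) (ginv : Fin n → Fin n → Pt n → ℝ)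
    (V : Fin n → Pt n → ℝ) (i : Fin n) : Pt n → ℝ :=
  fun z => ∑ k, z.2 k * dmVec F Γ Ω ginv k V i z

/-- The Lorentz force applied to `y`: `Y(y)^i := Y^i_j y^j`. -/
def Yy {n : ℕ} (Ω : Fin n → Fin n → (Fin n → ℝ) → ℝ)
    (ginv : Fin n → Fin n → Pt n → ℝ) (i : Fin n) : Pt n → ℝ :=
  fun z => ∑ j, Yl Ω ginv i j z * z.2 j

/-! The generator `u ↦ y^k u_{:k}` is the derivative along the vector field
`y^k (δ/δx^k + F Y^j_k ∂/∂y^j)`, hence a derivation, so `y^k φ_{:k}` splits into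
`y^k g_{ij:k} U^i V^j` plus `⟨XU,V⟩ + ⟨U,XV⟩` minus their connection terms. Almost metric
compatibility turns the horizontal part of `y^k g_{ij:k}` into exactly these connection terms,
and `∂g/∂y = 2C` leaves the Cartan term `2F C(Y(y), U, V)`. Finally `g_{il} Y^i_b = Ω_{bl}` does
not depend on `y`; differentiating it in `y` gives `⟨(∇_{·U}Y)(y), V⟩ = −2 C(Y(y), U, V)`. -/

section PartialDerivatives

variable {n : ℕ} {z : Pt n} {f g : Pt n → ℝ}

theorem pdy_mul (hf : DifferentiableAt ℝ f z) (hg : DifferentiableAt ℝ g z) (k : Fin n) :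
    pdy k (fun w => f w * g w) z = pdy k f z * g z + f z * pdy k g z := by
  unfold pdy
  rw [fderiv_fun_mul hf hg]
  simp only [FunLike.coe_add, FunLike.coe_smul, Pi.add_apply, Pi.smul_apply, smul_eq_mul]
  ring

theorem pdy_sum {ι : Type*} (s : Finset ι) {f : ι → Pt n → ℝ}
    (hf : ∀ i ∈ s, DifferentiableAt ℝ (f i) z) (k : Fin n) :
    pdy k (fun w => ∑ i ∈ s, f i w) z = ∑ i ∈ s, pdy k (f i) z := by
  simp [pdy, fderiv_fun_sum hf]

theorem pdy_const_mul (c : ℝ) (hf : DifferentiableAt ℝ f z) (k : Fin n) :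
    pdy k (fun w => c * f w) z = c * pdy k f z := by
  simp [pdy, fderiv_const_mul hf]

theorem Filter.EventuallyEq.pdy_eq (h : f =ᶠ[nhds z] g) (k : Fin n) : pdy k f z = pdy k g z := by
  unfold pdy
  rw [h.fderiv_eq]

theorem pdy_eq_zero_of_fst {h : (Fin n → ℝ) → ℝ}
    (hf : DifferentiableAt ℝ (fun w : Pt n => h w.1) z) (k : Fin n) :
    pdy k (fun w => h w.1) z = 0 := by
  rw [pdy, ← hf.lineDeriv_eq_fderiv, lineDeriv]
  simp

theorem pdy_pdy_comm (hf : ContDiffAt ℝ 2 f z) (i j : Fin n) :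
    pdy i (pdy j f) z = pdy j (pdy i f) z := by
  have hD : DifferentiableAt ℝ (fderiv ℝ f) z :=
    (hf.fderiv_right (m := 1) le_rfl).differentiableAt one_ne_zero
  have hcomp (v : Pt n) : fderiv ℝ (fun w => fderiv ℝ f w v) z
      = (ContinuousLinearMap.apply ℝ ℝ v).comp (fderiv ℝ (fderiv ℝ f) z) :=
    ((ContinuousLinearMap.apply ℝ ℝ v).hasFDerivAt.comp z hD.hasFDerivAt).fderiv
  unfold pdy
  rw [hcomp, hcomp]
  exact hf.isSymmSndFDerivAt (by simp [minSmoothness_of_isRCLikeNormedField]) _ _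

theorem ContDiffOn.differentiableAt_of_isOpen {W : Set (Pt n)} (hf : ContDiffOn ℝ (⊤ : ℕ∞) f W)
    (hW : IsOpen W) (hz : z ∈ W) : DifferentiableAt ℝ f z :=
  (hf.differentiableOn (by simp)).differentiableAt (hW.mem_nhds hz)

theorem ContDiffOn.pdy_of_isOpen {W : Set (Pt n)} (hW : IsOpen W)
    (hf : ContDiffOn ℝ (⊤ : ℕ∞) f W) (k : Fin n) : ContDiffOn ℝ (⊤ : ℕ∞) (pdy k f) W :=
  (ContinuousLinearMap.apply ℝ ℝ _).contDiff.comp_contDiffOn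
    (hf.fderiv_of_isOpen hW (by simp))

end PartialDerivatives

section MatrixInverse

variable {𝕜 E m : Type*} [NontriviallyNormedField 𝕜] [NormedAddCommGroup E] [NormedSpace 𝕜 E]
  [Fintype m] [DecidableEq m] {A B : E → Matrix m m 𝕜} {x : E}

theorem differentiableAt_matrix_det (hA : ∀ i j, DifferentiableAt 𝕜 (fun y => A y i j) x) :
    DifferentiableAt 𝕜 (fun y => (A y).det) x := by
  simp only [Matrix.det_apply']
  fun_prop

theorem differentiableAt_matrix_inv_apply (hA : ∀ i j, DifferentiableAt 𝕜 (fun y => A y i j) x)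
    (hdet : (A x).det ≠ 0) (i j : m) : DifferentiableAt 𝕜 (fun y => (A y)⁻¹ i j) x := by
  simp only [Matrix.inv_def, Ring.inverse_eq_inv', Matrix.smul_apply, Matrix.adjugate_apply,
    smul_eq_mul]
  refine ((differentiableAt_matrix_det hA).inv hdet).mul (differentiableAt_matrix_det fun a b => ?_)
  by_cases h : a = j <;> simp [Matrix.updateRow_apply, h, hA]

theorem differentiableAt_of_matrix_mul_eq_one (hA : ∀ i j, DifferentiableAt 𝕜 (fun y => A y i j) x)
    (hAB : ∀ᶠ y in nhds x, A y * B y = 1) (i j : m) :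
    DifferentiableAt 𝕜 (fun y => B y i j) x := by
  have hBA : (fun y => (A y)⁻¹ i j) =ᶠ[nhds x] fun y => B y i j :=
    hAB.mono fun y hy => congrFun₂ (Matrix.inv_eq_right_inv hy) i j
  exact (differentiableAt_matrix_inv_apply hA (Matrix.det_ne_zero_of_right_inverse hAB.self_of_nhds)
    i j).congr_of_eventuallyEq hBA.symm

end MatrixInverse

section FundamentalTensor

variable {n : ℕ} {W : Set (Pt n)} {F : Pt n → ℝ} {z : Pt n}

theorem contDiffOn_gF (hW : IsOpen W) (hF : ContDiffOn ℝ (⊤ : ℕ∞) F W) (i j : Fin n) :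
    ContDiffOn ℝ (⊤ : ℕ∞) (gF F i j) W :=
  contDiffOn_const.mul (((hF.pow 2).pdy_of_isOpen hW j).pdy_of_isOpen hW i)

theorem gF_comm (hW : IsOpen W) (hF : ContDiffOn ℝ (⊤ : ℕ∞) F W) (hz : z ∈ W) (i j : Fin n) :
    gF F i j z = gF F j i z := by
  have hF2 : ContDiffAt ℝ 2 (fun w => F w ^ 2) z :=
    ((hF.pow 2).contDiffAt (hW.mem_nhds hz)).of_le (WithTop.coe_le_coe.mpr le_top)
  unfold gF
  rw [pdy_pdy_comm hF2]

theorem CF_comm (hW : IsOpen W) (hF : ContDiffOn ℝ (⊤ : ℕ∞) F W) (hz : z ∈ W) (i j k : Fin n) :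
    CF F i j k z = CF F j i k z := by
  have hF2 : ContDiffAt ℝ 2 (pdy k fun w => F w ^ 2) z :=
    (((hF.pow 2).pdy_of_isOpen hW k).contDiffAt (hW.mem_nhds hz)).of_le
      (WithTop.coe_le_coe.mpr le_top)
  unfold CF
  rw [pdy_pdy_comm hF2]

theorem pdy_gF (hW : IsOpen W) (hF : ContDiffOn ℝ (⊤ : ℕ∞) F W) (hz : z ∈ W) (i j k : Fin n) :
    pdy k (gF F i j) z = 2 * CF F k i j z := by
  have hd : DifferentiableAt ℝ (pdy i (pdy j fun w => F w ^ 2)) z :=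
    (((hF.pow 2).pdy_of_isOpen hW j).pdy_of_isOpen hW i).differentiableAt_of_isOpen hW hz
  unfold gF CF
  rw [pdy_const_mul _ hd]
  ring

end FundamentalTensor

section LorentzForce

variable {n : ℕ} {W : Set (Pt n)} {F : Pt n → ℝ} {z : Pt n}
  {Ω : Fin n → Fin n → (Fin n → ℝ) → ℝ} {ginv : Fin n → Fin n → Pt n → ℝ}

theorem differentiableAt_ginv (hW : IsOpen W) (hF : ContDiffOn ℝ (⊤ : ℕ∞) F W)
    (hginv : ∀ z ∈ W, ∀ i j, ∑ k, gF F i k z * ginv k j z = if i = j then (1:ℝ) else 0)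
    (hz : z ∈ W) (i j : Fin n) : DifferentiableAt ℝ (ginv i j) z := by
  refine differentiableAt_of_matrix_mul_eq_one (A := fun w => Matrix.of fun i j => gF F i j w)
    (B := fun w => Matrix.of fun i j => ginv i j w) (fun i j => ?_)
    (Filter.eventually_of_mem (hW.mem_nhds hz) fun w hw => ?_) i j
  · exact (contDiffOn_gF hW hF i j).differentiableAt_of_isOpen hW hz
  · ext i j
    simpa [Matrix.mul_apply, Matrix.one_apply] using hginv w hw i j

theorem differentiableAt_Yl (hΩ : ∀ j k, DifferentiableAt ℝ (fun w : Pt n => Ω j k w.1) z)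
    (hginv : ∀ i j, DifferentiableAt ℝ (ginv i j) z) (i j : Fin n) :
    DifferentiableAt ℝ (Yl Ω ginv i j) z :=
  DifferentiableAt.fun_sum fun k _ => (hΩ j k).mul (hginv i k)

theorem sum_gF_mul_Yl (hW : IsOpen W) (hF : ContDiffOn ℝ (⊤ : ℕ∞) F W)
    (hginv : ∀ z ∈ W, ∀ i j, ∑ k, gF F i k z * ginv k j z = if i = j then (1:ℝ) else 0)
    (hz : z ∈ W) (l b : Fin n) :
    ∑ i, gF F i l z * Yl Ω ginv i b z = Ω b l z.1 :=
  calc ∑ i, gF F i l z * Yl Ω ginv i b z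
      = ∑ s, Ω b s z.1 * ∑ i, gF F l i z * ginv i s z := by
        simp only [Yl, Finset.mul_sum]
        rw [Finset.sum_comm]
        refine Finset.sum_congr rfl fun s _ => Finset.sum_congr rfl fun i _ => ?_
        rw [gF_comm hW hF hz]
        ring
    _ = Ω b l z.1 := by simp [hginv z hz]

theorem sum_gF_mul_pdy_Yl (hW : IsOpen W) (hF : ContDiffOn ℝ (⊤ : ℕ∞) F W)
    (hginv : ∀ z ∈ W, ∀ i j, ∑ k, gF F i k z * ginv k j z = if i = j then (1:ℝ) else 0)
    (hΩ : ∀ j k, DifferentiableAt ℝ (fun w : Pt n => Ω j k w.1) z) (hz : z ∈ W)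
    (a l b : Fin n) :
    ∑ i, gF F i l z * pdy a (Yl Ω ginv i b) z = -(2 * ∑ i, CF F a i l z * Yl Ω ginv i b z) := by
  have hg (i : Fin n) : DifferentiableAt ℝ (gF F i l) z :=
    (contDiffOn_gF hW hF i l).differentiableAt_of_isOpen hW hz
  have hY := differentiableAt_Yl hΩ (differentiableAt_ginv hW hF hginv hz)
  have hloc : (fun w => ∑ i, gF F i l w * Yl Ω ginv i b w) =ᶠ[nhds z] fun w => Ω b l w.1 :=
    Filter.eventually_of_mem (hW.mem_nhds hz) fun w hw => sum_gF_mul_Yl hW hF hginv hw l b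
  have hzero := (hloc.pdy_eq a).trans (pdy_eq_zero_of_fst (hΩ b l) a)
  rw [pdy_sum _ fun i _ => (hg i).fun_mul (hY i b)] at hzero
  simp only [pdy_mul (hg _) (hY _ b), pdy_gF hW hF hz, Finset.sum_add_distrib] at hzero
  simp only [mul_assoc, ← Finset.mul_sum] at hzero
  linarith

end LorentzForce

section MagneticDerivative

variable {n : ℕ} {F : Pt n → ℝ} {Γ : Fin n → Fin n → Fin n → Pt n → ℝ}
  {Ω : Fin n → Fin n → (Fin n → ℝ) → ℝ} {ginv : Fin n → Fin n → Pt n → ℝ} {z : Pt n}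
  {u v : Pt n → ℝ}

/-- `δ/δx^k + F Y^p_k ∂/∂y^p` at `z`, with `δ/δx^k = ∂/∂x^k − N^p_k ∂/∂y^p`. -/
def magneticLift (F : Pt n → ℝ) (Γ : Fin n → Fin n → Fin n → Pt n → ℝ)
    (Ω : Fin n → Fin n → (Fin n → ℝ) → ℝ) (ginv : Fin n → Fin n → Pt n → ℝ) (k : Fin n)
    (z : Pt n) : Pt n :=
  (Pi.single k 1, fun p => F z * Yl Ω ginv p k z - Nc Γ p k z)

def magneticSpray (F : Pt n → ℝ) (Γ : Fin n → Fin n → Fin n → Pt n → ℝ)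
    (Ω : Fin n → Fin n → (Fin n → ℝ) → ℝ) (ginv : Fin n → Fin n → Pt n → ℝ) (z : Pt n) :
    Pt n :=
  ∑ k, z.2 k • magneticLift F Γ Ω ginv k z

theorem dmS_eq_fderiv (k : Fin n) (u : Pt n → ℝ) :
    dmS F Γ Ω ginv k u z = fderiv ℝ u z (magneticLift F Γ Ω ginv k z) := by
  set c : Fin n → ℝ := fun p => F z * Yl Ω ginv p k z - Nc Γ p k z
  have hsplit : magneticLift F Γ Ω ginv k z
      = (Pi.single k 1, 0) + ∑ p, c p • ((0 : Fin n → ℝ), (Pi.single p 1 : Fin n → ℝ)) := by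
    ext i
    · simp [magneticLift, Prod.fst_sum]
    · simp [magneticLift, c, Prod.snd_sum, Finset.sum_apply, Pi.single_apply]
  rw [hsplit, map_add, map_sum]
  simp only [map_smul, smul_eq_mul, c, sub_mul, Finset.sum_sub_distrib, mul_assoc,
    ← Finset.mul_sum]
  unfold dmS dhS pdx pdy
  ring

theorem Xs_eq_fderiv (u : Pt n → ℝ) :
    Xs F Γ Ω ginv u z = fderiv ℝ u z (magneticSpray F Γ Ω ginv z) := by
  simp only [Xs, dmS_eq_fderiv, magneticSpray, map_sum, map_smul, smul_eq_mul]

theorem Xs_mul (hu : DifferentiableAt ℝ u z) (hv : DifferentiableAt ℝ v z) :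
    Xs F Γ Ω ginv (fun w => u w * v w) z = Xs F Γ Ω ginv u z * v z + u z * Xs F Γ Ω ginv v z := by
  simp only [Xs_eq_fderiv, fderiv_fun_mul hu hv, FunLike.coe_add, FunLike.coe_smul, Pi.add_apply,
    Pi.smul_apply, smul_eq_mul]
  ring

theorem Xs_sum {ι : Type*} (s : Finset ι) {f : ι → Pt n → ℝ}
    (hf : ∀ i ∈ s, DifferentiableAt ℝ (f i) z) :
    Xs F Γ Ω ginv (fun w => ∑ i ∈ s, f i w) z = ∑ i ∈ s, Xs F Γ Ω ginv (f i) z := by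
  simp [Xs_eq_fderiv, fderiv_fun_sum hf]

end MagneticDerivative

section Leibniz

variable {n : ℕ} {W : Set (Pt n)} {F : Pt n → ℝ} {Γ : Fin n → Fin n → Fin n → Pt n → ℝ}
  {Ω : Fin n → Fin n → (Fin n → ℝ) → ℝ} {ginv : Fin n → Fin n → Pt n → ℝ} {z : Pt n}
  {U V : Fin n → Pt n → ℝ}

theorem dmS_gF (hW : IsOpen W) (hF : ContDiffOn ℝ (⊤ : ℕ∞) F W) (hz : z ∈ W)
    (hcompat : ∀ j l m, pdx m (gF F j l) z =
      ∑ k, (gF F k l z * Γ k j m z + gF F k j z * Γ k l m z + 2 * CF F j k l z * Nc Γ k m z))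
    (i j k : Fin n) :
    dmS F Γ Ω ginv k (gF F i j) z = ∑ m, (gF F m j z * Γ m i k z + gF F m i z * Γ m j k z)
      + 2 * F z * ∑ s, Yl Ω ginv s k z * CF F s i j z := by
  have hC : ∑ m, 2 * CF F i m j z * Nc Γ m k z = ∑ m, Nc Γ m k z * pdy m (gF F i j) z :=
    Finset.sum_congr rfl fun m _ => by rw [pdy_gF hW hF hz, CF_comm hW hF hz]; ring
  unfold dmS dhS
  simp only [hcompat, Finset.sum_add_distrib, hC, add_sub_cancel_right, pdy_gF hW hF hz,
    Finset.mul_sum]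
  exact congrArg _ (Finset.sum_congr rfl fun s _ => by ring)

theorem Xs_gF (hW : IsOpen W) (hF : ContDiffOn ℝ (⊤ : ℕ∞) F W) (hz : z ∈ W)
    (hcompat : ∀ j l m, pdx m (gF F j l) z =
      ∑ k, (gF F k l z * Γ k j m z + gF F k j z * Γ k l m z + 2 * CF F j k l z * Nc Γ k m z))
    (i j : Fin n) :
    Xs F Γ Ω ginv (gF F i j) z = ∑ m, (gF F m j z * Nc Γ m i z + gF F m i z * Nc Γ m j z)
      + 2 * F z * ∑ s, Yy Ω ginv s z * CF F s i j z := by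
  unfold Xs
  simp only [dmS_gF hW hF hz hcompat, Nc, Yy, mul_add, Finset.mul_sum, Finset.sum_mul,
    Finset.sum_add_distrib]
  congr 1
  congr 1
  all_goals
    rw [Finset.sum_comm]
    refine Finset.sum_congr rfl fun m _ => Finset.sum_congr rfl fun k _ => by ring

theorem XVec_eq (hΓ : ∀ i j k, Γ i j k z = Γ i k j z) (U : Fin n → Pt n → ℝ) (i : Fin n) :
    XVec F Γ Ω ginv U i z = Xs F Γ Ω ginv (U i) z + ∑ p, Nc Γ i p z * U p z := by
  have hN : ∑ k, z.2 k * ∑ p, Γ i k p z * U p z = ∑ p, Nc Γ i p z * U p z := by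
    simp only [Nc, Finset.mul_sum, Finset.sum_mul]
    rw [Finset.sum_comm]
    refine Finset.sum_congr rfl fun p _ => Finset.sum_congr rfl fun k _ => ?_
    rw [hΓ]
    ring
  rw [← hN, Xs, ← Finset.sum_add_distrib]
  refine Finset.sum_congr rfl fun k _ => ?_
  unfold dmVec dmS dhS
  ring

def cartanForm (F : Pt n → ℝ) (X U V : Fin n → Pt n → ℝ) (z : Pt n) : ℝ :=
  ∑ i, ∑ j, (∑ s, X s z * CF F s i j z) * U i z * V j z

theorem Xs_iprod_eq_sum (hg : ∀ i j, DifferentiableAt ℝ (gF F i j) z)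
    (hU : ∀ i, DifferentiableAt ℝ (U i) z) (hV : ∀ i, DifferentiableAt ℝ (V i) z) :
    Xs F Γ Ω ginv (iprod F U V) z = ∑ i, ∑ j, (Xs F Γ Ω ginv (gF F i j) z * U i z * V j z
      + gF F i j z * Xs F Γ Ω ginv (U i) z * V j z
      + gF F i j z * U i z * Xs F Γ Ω ginv (V j) z) := by
  have hgUV (i j : Fin n) := ((hg i j).fun_mul (hU i)).fun_mul (hV j)
  unfold iprod
  rw [Xs_sum _ fun i _ => DifferentiableAt.fun_sum fun j _ => hgUV i j]
  refine Finset.sum_congr rfl fun i _ => ?_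
  rw [Xs_sum _ fun j _ => hgUV i j]
  refine Finset.sum_congr rfl fun j _ => ?_
  rw [Xs_mul ((hg i j).fun_mul (hU i)) (hV j), Xs_mul (hg i j) (hU i)]
  ring

theorem Xs_iprod (hW : IsOpen W) (hF : ContDiffOn ℝ (⊤ : ℕ∞) F W) (hz : z ∈ W)
    (hΓ : ∀ i j k, Γ i j k z = Γ i k j z)
    (hcompat : ∀ j l m, pdx m (gF F j l) z =
      ∑ k, (gF F k l z * Γ k j m z + gF F k j z * Γ k l m z + 2 * CF F j k l z * Nc Γ k m z))
    (hU : ∀ i, DifferentiableAt ℝ (U i) z) (hV : ∀ i, DifferentiableAt ℝ (V i) z) :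
    Xs F Γ Ω ginv (iprod F U V) z = iprod F (XVec F Γ Ω ginv U) V z
      + iprod F U (XVec F Γ Ω ginv V) z + 2 * F z * cartanForm F (Yy Ω ginv) U V z := by
  have hg (i j : Fin n) : DifferentiableAt ℝ (gF F i j) z :=
    (contDiffOn_gF hW hF i j).differentiableAt_of_isOpen hW hz
  have hNU : ∑ i, ∑ j, (∑ m, gF F m j z * Nc Γ m i z) * U i z * V j z
      = ∑ i, ∑ j, gF F i j z * (∑ p, Nc Γ i p z * U p z) * V j z := by
    simp only [Finset.sum_mul, Finset.mul_sum]
    rw [Finset.sum_comm_cycle]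
    refine Finset.sum_congr rfl fun m _ => ?_
    rw [Finset.sum_comm]
    exact Finset.sum_congr rfl fun j _ => Finset.sum_congr rfl fun i _ => by ring
  have hNV : ∑ i, ∑ j, (∑ m, gF F m i z * Nc Γ m j z) * U i z * V j z
      = ∑ i, ∑ j, gF F i j z * U i z * (∑ p, Nc Γ j p z * V p z) := by
    simp only [Finset.sum_mul, Finset.mul_sum]
    refine Finset.sum_congr rfl fun i _ => ?_
    rw [Finset.sum_comm]
    exact Finset.sum_congr rfl fun m _ => Finset.sum_congr rfl fun j _ => by
      rw [gF_comm hW hF hz]; ring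
  have hC : ∑ i, ∑ j, (2 * F z * ∑ s, Yy Ω ginv s z * CF F s i j z) * U i z * V j z
      = 2 * F z * cartanForm F (Yy Ω ginv) U V z := by
    simp only [cartanForm, Finset.mul_sum, Finset.sum_mul]
    exact Finset.sum_congr rfl fun i _ => Finset.sum_congr rfl fun j _ =>
      Finset.sum_congr rfl fun s _ => by ring
  rw [Xs_iprod_eq_sum hg hU hV]
  simp only [iprod, XVec_eq hΓ, Xs_gF hW hF hz hcompat, add_mul, mul_add,
    Finset.sum_add_distrib, hNU, hNV, hC]
  ring

end Leibniz

section Cartan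

variable {n : ℕ} {W : Set (Pt n)} {F : Pt n → ℝ}
  {Ω : Fin n → Fin n → (Fin n → ℝ) → ℝ} {ginv : Fin n → Fin n → Pt n → ℝ} {z : Pt n}

theorem iprod_vderiv_Yl (hW : IsOpen W) (hF : ContDiffOn ℝ (⊤ : ℕ∞) F W)
    (hginv : ∀ z ∈ W, ∀ i j, ∑ k, gF F i k z * ginv k j z = if i = j then (1:ℝ) else 0)
    (hΩ : ∀ j k, DifferentiableAt ℝ (fun w : Pt n => Ω j k w.1) z) (hz : z ∈ W)
    (U V : Fin n → Pt n → ℝ) :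
    iprod F (fun i w => ∑ a, ∑ b, pdy a (Yl Ω ginv i b) w * U a w * w.2 b) V z
      = -(2 * cartanForm F (Yy Ω ginv) U V z) := by
  have hrow (j : Fin n) :
      ∑ i, gF F i j z * ∑ a, ∑ b, pdy a (Yl Ω ginv i b) z * U a z * z.2 b
        = -(2 * ∑ a, (∑ s, Yy Ω ginv s z * CF F s a j z) * U a z) :=
    calc _ = ∑ a, ∑ b, (∑ i, gF F i j z * pdy a (Yl Ω ginv i b) z) * U a z * z.2 b := by
          simp only [Finset.mul_sum, Finset.sum_mul]
          rw [Finset.sum_comm]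
          refine Finset.sum_congr rfl fun a _ => ?_
          rw [Finset.sum_comm]
          exact Finset.sum_congr rfl fun b _ => Finset.sum_congr rfl fun i _ => by ring
      _ = ∑ a, ∑ b, -(2 * ∑ s, CF F a s j z * Yl Ω ginv s b z) * U a z * z.2 b := by
          simp only [sum_gF_mul_pdy_Yl hW hF hginv hΩ hz]
      _ = _ := by
          simp only [Yy, Finset.mul_sum, Finset.sum_mul, neg_mul, Finset.sum_neg_distrib]
          refine congrArg Neg.neg (Finset.sum_congr rfl fun a _ => ?_)
          rw [Finset.sum_comm]
          exact Finset.sum_congr rfl fun s _ => Finset.sum_congr rfl fun b _ => by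
            rw [CF_comm hW hF hz]; ring
  calc _ = ∑ j, (∑ i, gF F i j z * ∑ a, ∑ b, pdy a (Yl Ω ginv i b) z * U a z * z.2 b) * V j z := by
        simp only [iprod, Finset.sum_mul]
        rw [Finset.sum_comm]
    _ = ∑ j, -(2 * ∑ a, (∑ s, Yy Ω ginv s z * CF F s a j z) * U a z) * V j z := by
        simp only [hrow]
    _ = _ := by
        simp only [cartanForm, neg_mul, Finset.sum_neg_distrib, Finset.mul_sum, Finset.sum_mul]
        rw [Finset.sum_comm]
        exact congrArg Neg.neg (Finset.sum_congr rfl fun a _ => Finset.sum_congr rfl fun j _ =>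
          Finset.sum_congr rfl fun s _ => by ring)

end Cartan

theorem stmt_16_general (n : ℕ) (W : Set (Pt n)) (hWopen : IsOpen W)
    (F : Pt n → ℝ) (hFsmooth : ContDiffOn ℝ (⊤ : ℕ∞) F W)
    (ginv : Fin n → Fin n → Pt n → ℝ)
    (hginv : ∀ z ∈ W, ∀ i j, ∑ k, gF F i k z * ginv k j z = if i = j then (1:ℝ) else 0)
    (Γ : Fin n → Fin n → Fin n → Pt n → ℝ)
    (hΓsym : ∀ i j k, ∀ z ∈ W, Γ i j k z = Γ i k j z)
    (hcompat : ∀ z ∈ W, ∀ j l m,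
      pdx m (gF F j l) z =
        ∑ k, (gF F k l z * Γ k j m z + gF F k j z * Γ k l m z
          + 2 * CF F j k l z * Nc Γ k m z))
    (Ω : Fin n → Fin n → (Fin n → ℝ) → ℝ)
    (hΩsmooth : ∀ j k, ContDiffOn ℝ (⊤ : ℕ∞) (fun z : Pt n => Ω j k z.1) W)
    (U V : Fin n → Pt n → ℝ)
    (hU : ∀ i, ContDiffOn ℝ (⊤ : ℕ∞) (U i) W)
    (hV : ∀ i, ContDiffOn ℝ (⊤ : ℕ∞) (V i) W) :
    ∀ z ∈ W, F z = 1 →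
      (∑ k, z.2 k * dmS F Γ Ω ginv k (iprod F U V) z)
        = iprod F (XVec F Γ Ω ginv U) V z + iprod F U (XVec F Γ Ω ginv V) z
          - iprod F
              (fun i w => ∑ j, ∑ k, pdy j (Yl Ω ginv i k) w * U j w * w.2 k) V z := by
  intro z hz hF1
  have hleibniz := Xs_iprod (Ω := Ω) (ginv := ginv) hWopen hFsmooth hz
    (fun i j k => hΓsym i j k z hz) (hcompat z hz)
    (fun i => (hU i).differentiableAt_of_isOpen hWopen hz)
    (fun i => (hV i).differentiableAt_of_isOpen hWopen hz)
  have hcartan := iprod_vderiv_Yl hWopen hFsmooth hginv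
    (fun j k => (hΩsmooth j k).differentiableAt_of_isOpen hWopen hz) hz U V
  change Xs F Γ Ω ginv (iprod F U V) z = _
  rw [hleibniz, hcartan, hF1]
  ring

/-- **Leibniz rule for the magnetic derivative of the inner product:** on the set
where `F = 1`, with `φ := ⟨U,V⟩`,
`y^k φ_{:k} = ⟨XU,V⟩ + ⟨U,XV⟩ − ⟨(∇_{·U}Y)(y), V⟩`. -/
theorem stmt_16 (n : ℕ) (hn : 1 ≤ n) (W : Set (Pt n)) (hWopen : IsOpen W)
    (hWy : ∀ z ∈ W, z.2 ≠ 0)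
    (hWcone : ∀ z ∈ W, ∀ t : ℝ, 0 < t → (z.1, t • z.2) ∈ W)
    (F : Pt n → ℝ) (hFsmooth : ContDiffOn ℝ (⊤ : ℕ∞) F W)
    (hFpos : ∀ z ∈ W, 0 < F z)
    (hFhom : ∀ z ∈ W, ∀ t : ℝ, 0 < t → F (z.1, t • z.2) = t * F z)
    (ginv : Fin n → Fin n → Pt n → ℝ)
    (hginv : ∀ z ∈ W, ∀ i j, ∑ k, gF F i k z * ginv k j z = if i = j then (1:ℝ) else 0)
    (hginv' : ∀ z ∈ W, ∀ i j, ∑ k, ginv i k z * gF F k j z = if i = j then (1:ℝ) else 0)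
    (Γ : Fin n → Fin n → Fin n → Pt n → ℝ)
    (hΓsmooth : ∀ i j k, ContDiffOn ℝ (⊤ : ℕ∞) (Γ i j k) W)
    (hΓsym : ∀ i j k, ∀ z ∈ W, Γ i j k z = Γ i k j z)
    (hcompat : ∀ z ∈ W, ∀ j l m,
      pdx m (gF F j l) z =
        ∑ k, (gF F k l z * Γ k j m z + gF F k j z * Γ k l m z
          + 2 * CF F j k l z * Nc Γ k m z))
    (Ω : Fin n → Fin n → (Fin n → ℝ) → ℝ)
    (hΩsmooth : ∀ j k, ContDiffOn ℝ (⊤ : ℕ∞) (fun z : Pt n => Ω j k z.1) W)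
    (hΩanti : ∀ z ∈ W, ∀ j k, Ω j k z.1 = -Ω k j z.1)
    (U V : Fin n → Pt n → ℝ)
    (hU : ∀ i, ContDiffOn ℝ (⊤ : ℕ∞) (U i) W)
    (hV : ∀ i, ContDiffOn ℝ (⊤ : ℕ∞) (V i) W) :
    ∀ z ∈ W, F z = 1 →
      (∑ k, z.2 k * dmS F Γ Ω ginv k (iprod F U V) z)
        = iprod F (XVec F Γ Ω ginv U) V z + iprod F U (XVec F Γ Ω ginv V) z
          - iprod F
              (fun i w => ∑ j, ∑ k, pdy j (Yl Ω ginv i k) w * U j w * w.2 k) V z :=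
  stmt_16_general n W hWopen F hFsmooth ginv hginv Γ hΓsym hcompat Ω hΩsmooth U V hU hV

end
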